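/- The assignments X ↦ O_X on objects and [M, U_M] ↦ [M ⊗_B O_Y] on morphisms (where M ⊗_B O_Y is viewed as an O_X–O_Y correspondence via the homomorphism σ : O_X → K(M ⊗_B O_Y) induced by the C-covariant representation) define a functor E from the category ECCor to the enchilada category. In particular, for morphisms [M, U_M] : X → Y and [N, U_N] : Y → Z in ECCor there is an isomorphism of O_X–O_Z correspondences (M ⊗_B O_Y) ⊗_{O_Y} (N ⊗_C O_Z) ≅ (M ⊗_B N) ⊗_C O_Z, and E sends the identity morphism [A, U_A] on X to the class of the identity correspondence O_X. -/

import Mathlib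

/-!  Common framework: C*-correspondences, tensor products, representations,
Cuntz–Pimsner algebras, and the category `ECCor`, axiomatised as structures. -/

noncomputable section

universe u

/-- The closed linear span of a subset of a topological `ℂ`-module. -/
def clspan {V : Type*} [AddCommMonoid V] [Module ℂ V] [TopologicalSpace V] (s : Set V) : Set V :=
  closure ((Submodule.span ℂ s : Submodule ℂ V) : Set V)

/-- A (nondegenerate) C*-correspondence from `A` to `B`: a right Hilbert `B`-module `X`
equipped with a left action of `A` by adjointable operators, such that `A · X` is dense. -/
structure Corr (A : Type u) (B : Type u)
    [NonUnitalCStarAlgebra A] [NonUnitalCStarAlgebra B] : Type (u + 1) where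
  /-- the underlying module -/
  X : Type u
  [nacg : NormedAddCommGroup X]
  [nsp : NormedSpace ℂ X]
  [cs : CompleteSpace X]
  /-- the `B`-valued inner product `⟨·,·⟩_B` -/
  ip : X → X → B
  /-- the right action of `B` -/
  sm : X → B → X
  /-- the left action of `A` -/
  la : A → X → X
  sm_add : ∀ (x y : X) (b : B), sm (x + y) b = sm x b + sm y b
  sm_add' : ∀ (x : X) (b c : B), sm x (b + c) = sm x b + sm x c
  sm_mul : ∀ (x : X) (b c : B), sm (sm x b) c = sm x (b * c)
  sm_smul : ∀ (z : ℂ) (x : X) (b : B), sm (z • x) b = z • sm x b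
  sm_smul' : ∀ (z : ℂ) (x : X) (b : B), sm x (z • b) = z • sm x b
  sm_bound : ∀ (x : X) (b : B), ‖sm x b‖ ≤ ‖x‖ * ‖b‖
  ip_add : ∀ (x y z : X), ip x (y + z) = ip x y + ip x z
  ip_smul : ∀ (z : ℂ) (x y : X), ip x (z • y) = z • ip x y
  ip_star : ∀ (x y : X), star (ip x y) = ip y x
  ip_sm : ∀ (x y : X) (b : B), ip x (sm y b) = ip x y * b
  ip_pos : ∀ x : X, ∃ b : B, ip x x = star b * b
  ip_norm : ∀ x : X, ‖x‖ ^ 2 = ‖ip x x‖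
  ip_bound : ∀ x y : X, ‖ip x y‖ ≤ ‖x‖ * ‖y‖
  la_add : ∀ (a : A) (x y : X), la a (x + y) = la a x + la a y
  la_smul : ∀ (a : A) (z : ℂ) (x : X), la a (z • x) = z • la a x
  la_add' : ∀ (a b : A) (x : X), la (a + b) x = la a x + la b x
  la_mul : ∀ (a b : A) (x : X), la (a * b) x = la a (la b x)
  la_smul' : ∀ (z : ℂ) (a : A) (x : X), la (z • a) x = z • la a x
  la_adj : ∀ (a : A) (x y : X), ip (la a x) y = ip x (la (star a) y)
  la_bound : ∀ (a : A) (x : X), ‖la a x‖ ≤ ‖a‖ * ‖x‖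
  la_sm : ∀ (a : A) (x : X) (b : B), la a (sm x b) = sm (la a x) b
  /-- nondegeneracy: `A · X` is dense in `X` -/
  nondeg : clspan {y : X | ∃ (a : A) (x : X), y = la a x} = Set.univ

attribute [instance] Corr.nacg Corr.nsp Corr.cs

namespace Corr

variable {A B : Type u} [NonUnitalCStarAlgebra A] [NonUnitalCStarAlgebra B]

/-- The left action, as a continuous linear operator. -/
def lmul (E : Corr A B) (a : A) : E.X →L[ℂ] E.X :=
  LinearMap.mkContinuous
    { toFun := E.la a
      map_add' := E.la_add a
      map_smul' := fun z x => E.la_smul a z x }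
    ‖a‖ (E.la_bound a)

/-- The rank-one operator `θ_{x,y} : z ↦ x · ⟨y, z⟩_B`. -/
def rankOne (E : Corr A B) (x y : E.X) : E.X →L[ℂ] E.X :=
  LinearMap.mkContinuous
    { toFun := fun z => E.sm x (E.ip y z)
      map_add' := fun u v => by
        show E.sm x (E.ip y (u + v)) = E.sm x (E.ip y u) + E.sm x (E.ip y v)
        rw [E.ip_add, E.sm_add']
      map_smul' := fun c u => by
        show E.sm x (E.ip y (c • u)) = c • E.sm x (E.ip y u)
        rw [E.ip_smul, E.sm_smul'] }
    (‖x‖ * ‖y‖)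
    (fun z => by
      calc ‖E.sm x (E.ip y z)‖ ≤ ‖x‖ * ‖E.ip y z‖ := E.sm_bound _ _
        _ ≤ ‖x‖ * (‖y‖ * ‖z‖) :=
            mul_le_mul_of_nonneg_left (E.ip_bound y z) (norm_nonneg x)
        _ = ‖x‖ * ‖y‖ * ‖z‖ := (mul_assoc _ _ _).symm)

/-- The compact operators `K(X)`: the closed linear span of the rank-one operators. -/
def compacts (E : Corr A B) : Set (E.X →L[ℂ] E.X) :=
  clspan (Set.range fun p : E.X × E.X => E.rankOne p.1 p.2)

/-- A correspondence is injective if its left action is injective. -/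
def Injective (E : Corr A B) : Prop := Function.Injective E.lmul

/-- A correspondence is regular if its left action is injective with values in the compacts. -/
def Regular (E : Corr A B) : Prop :=
  Function.Injective E.lmul ∧ ∀ a : A, E.lmul a ∈ E.compacts

/-- Katsura's ideal `J_X = φ_X⁻¹(K(X)) ∩ (ker φ_X)^⊥` of a correspondence over `A`. -/
def katsuraIdeal {A : Type u} [NonUnitalCStarAlgebra A] (E : Corr A A) : Set A :=
  {a : A | E.lmul a ∈ E.compacts ∧ ∀ b : A, E.lmul b = 0 → a * b = 0}

/-- The closed submodule `M · J` of `M` determined by a subset `J ⊆ B`. -/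
def smSet (M : Corr A B) (J : Set B) : Set M.X :=
  clspan {ξ : M.X | ∃ (m : M.X) (b : B), b ∈ J ∧ ξ = M.sm m b}

/-- A pair of operators on a correspondence which are adjoint to each other. -/
def IsAdjointPair (W : Corr A B) (T S : W.X →L[ℂ] W.X) : Prop :=
  ∀ ξ η : W.X, W.ip (T ξ) η = W.ip ξ (S η)

end Corr

/-- The condition `J_X · M ⊆ M · J_Y` on an `A–B` correspondence `M`,
relative to correspondences `X` over `A` and `Y` over `B`. -/
def KatsuraCompat {A B : Type u} [NonUnitalCStarAlgebra A] [NonUnitalCStarAlgebra B]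
    (E : Corr A A) (M : Corr A B) (F : Corr B B) : Prop :=
  ∀ a ∈ E.katsuraIdeal, ∀ m : M.X, M.la a m ∈ M.smSet F.katsuraIdeal

/-- An isomorphism of `A–B` correspondences. -/
structure CorrIso {A B : Type u} [NonUnitalCStarAlgebra A] [NonUnitalCStarAlgebra B]
    (E F : Corr A B) where
  toFun : E.X → F.X
  invFun : F.X → E.X
  left_inv : Function.LeftInverse invFun toFun
  right_inv : Function.RightInverse invFun toFun
  map_add : ∀ x y : E.X, toFun (x + y) = toFun x + toFun y
  map_smul : ∀ (c : ℂ) (x : E.X), toFun (c • x) = c • toFun x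
  map_la : ∀ (a : A) (x : E.X), toFun (E.la a x) = F.la a (toFun x)
  map_ip : ∀ x y : E.X, F.ip (toFun x) (toFun y) = E.ip x y

/-- Witness that the correspondence `T` *is* the balanced tensor product `E ⊗_B F`,
via the bilinear map `mk2 : (x, y) ↦ x ⊗ y`. -/
structure TensorData {A B C : Type u} [NonUnitalCStarAlgebra A] [NonUnitalCStarAlgebra B]
    [NonUnitalCStarAlgebra C] (E : Corr A B) (F : Corr B C) (T : Corr A C) where
  mk2 : E.X → F.X → T.X
  add_l : ∀ (x x' : E.X) (y : F.X), mk2 (x + x') y = mk2 x y + mk2 x' y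
  add_r : ∀ (x : E.X) (y y' : F.X), mk2 x (y + y') = mk2 x y + mk2 x y'
  smul_l : ∀ (c : ℂ) (x : E.X) (y : F.X), mk2 (c • x) y = c • mk2 x y
  smul_r : ∀ (c : ℂ) (x : E.X) (y : F.X), mk2 x (c • y) = c • mk2 x y
  balanced : ∀ (x : E.X) (b : B) (y : F.X), mk2 (E.sm x b) y = mk2 x (F.la b y)
  ip_mk : ∀ (x x' : E.X) (y y' : F.X),
    T.ip (mk2 x y) (mk2 x' y') = F.ip y (F.la (E.ip x x') y')
  la_mk : ∀ (a : A) (x : E.X) (y : F.X), T.la a (mk2 x y) = mk2 (E.la a x) y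
  sm_mk : ∀ (x : E.X) (y : F.X) (c : C), T.sm (mk2 x y) c = mk2 x (F.sm y c)
  dense : clspan (Set.range fun p : E.X × F.X => mk2 p.1 p.2) = Set.univ

/-- Witness that `C` is the `A–D` correspondence obtained from the C*-algebra `D`
by letting `A` act on the left through the map `ψ : A → D` (e.g. the identity
correspondence when `D = A` and `ψ = id`). -/
structure PullCorr {A D : Type u} [NonUnitalCStarAlgebra A] [NonUnitalCStarAlgebra D]
    (ψ : A → D) (C : Corr A D) where
  u : D → C.X
  bij : Function.Bijective u
  add : ∀ d d' : D, u (d + d') = u d + u d'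
  smul : ∀ (c : ℂ) (d : D), u (c • d) = c • u d
  ip : ∀ d d' : D, C.ip (u d) (u d') = star d * d'
  la : ∀ (a : A) (d : D), C.la a (u d) = u (ψ a * d)
  sm : ∀ d d' : D, C.sm (u d) d' = u (d * d')

/-- Witness that `W'` is the `C–D` correspondence obtained from the `B–D` correspondence `W`
by transferring the left action along a homomorphism `σ : C → L(W)`. -/
structure ReCorr {B C D : Type u} [NonUnitalCStarAlgebra B] [NonUnitalCStarAlgebra C]
    [NonUnitalCStarAlgebra D] (W : Corr B D) (σ : C → (W.X →L[ℂ] W.X)) (W' : Corr C D) where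
  w : W.X → W'.X
  bij : Function.Bijective w
  add : ∀ ξ η : W.X, w (ξ + η) = w ξ + w η
  smul : ∀ (c : ℂ) (ξ : W.X), w (c • ξ) = c • w ξ
  ip_eq : ∀ ξ η : W.X, W'.ip (w ξ) (w η) = W.ip ξ η
  sm_eq : ∀ (ξ : W.X) (d : D), w (W.sm ξ d) = W'.sm (w ξ) d
  la_eq : ∀ (c : C) (ξ : W.X), W'.la c (w ξ) = w (σ c ξ)

/-- The structure of an `A–B` imprimitivity bimodule on an `A–B` correspondence `M`:
a compatible left `A`-valued inner product, full on both sides. -/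
structure ImpData {A B : Type u} [NonUnitalCStarAlgebra A] [NonUnitalCStarAlgebra B]
    (M : Corr A B) where
  lip : M.X → M.X → A
  lip_add : ∀ x y z : M.X, lip (x + y) z = lip x z + lip y z
  lip_smul : ∀ (c : ℂ) (x y : M.X), lip (c • x) y = c • lip x y
  lip_star : ∀ x y : M.X, star (lip x y) = lip y x
  lip_la : ∀ (a : A) (x y : M.X), lip (M.la a x) y = a * lip x y
  lip_pos : ∀ x : M.X, ∃ a : A, lip x x = star a * a
  compat : ∀ x y z : M.X, M.la (lip x y) z = M.sm x (M.ip y z)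
  full_left : clspan {a : A | ∃ x y : M.X, a = lip x y} = Set.univ
  full_right : clspan {b : B | ∃ x y : M.X, b = M.ip x y} = Set.univ

/-- Witness that the `B–A` correspondence `N` is the dual (conjugate) imprimitivity bimodule
of the `A–B` imprimitivity bimodule `M`. -/
structure DualData {A B : Type u} [NonUnitalCStarAlgebra A] [NonUnitalCStarAlgebra B]
    (M : Corr A B) (imp : ImpData M) (N : Corr B A) where
  d : M.X → N.X
  bij : Function.Bijective d
  add : ∀ x y : M.X, d (x + y) = d x + d y
  conj_smul : ∀ (c : ℂ) (x : M.X), d (c • x) = (starRingEnd ℂ c) • d x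
  la_eq : ∀ (b : B) (x : M.X), N.la b (d x) = d (M.sm x (star b))
  sm_eq : ∀ (x : M.X) (a : A), N.sm (d x) a = d (M.la (star a) x)
  ip_eq : ∀ x y : M.X, N.ip (d x) (d y) = imp.lip x y

/-- Witness that `X` (a correspondence over `A`) is a nondegenerate subcorrespondence of
`Y` (a correspondence over `B`), via `(φ̇, ϕ)`. -/
structure SubCorr {A B : Type u} [NonUnitalCStarAlgebra A] [NonUnitalCStarAlgebra B]
    (E : Corr A A) (F : Corr B B) where
  φd : E.X → F.X
  φd_inj : Function.Injective φd
  φd_add : ∀ x y : E.X, φd (x + y) = φd x + φd y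
  φd_smul : ∀ (c : ℂ) (x : E.X), φd (c • x) = c • φd x
  ϕ : A → B
  ϕ_inj : Function.Injective ϕ
  ϕ_add : ∀ a b : A, ϕ (a + b) = ϕ a + ϕ b
  ϕ_mul : ∀ a b : A, ϕ (a * b) = ϕ a * ϕ b
  ϕ_star : ∀ a : A, ϕ (star a) = star (ϕ a)
  ϕ_smul : ∀ (c : ℂ) (a : A), ϕ (c • a) = c • ϕ a
  ϕ_nondeg : clspan {b : B | ∃ (a : A) (c : B), b = ϕ a * c} = Set.univ
  la_eq : ∀ (a : A) (x : E.X), φd (E.la a x) = F.la (ϕ a) (φd x)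
  ip_eq : ∀ x y : E.X, F.ip (φd x) (φd y) = ϕ (E.ip x y)
  dense : clspan {y : F.X | ∃ (x : E.X) (b : B), y = F.sm (φd x) b} = Set.univ

/-- A representation `(π, t)` of a correspondence `X` over `A` on a C*-algebra `D`. -/
structure CorrRep {A : Type u} [NonUnitalCStarAlgebra A] (E : Corr A A)
    (D : Type u) [NonUnitalCStarAlgebra D] where
  π : A → D
  t : E.X → D
  π_add : ∀ a b : A, π (a + b) = π a + π b
  π_mul : ∀ a b : A, π (a * b) = π a * π b
  π_star : ∀ a : A, π (star a) = star (π a)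
  π_smul : ∀ (c : ℂ) (a : A), π (c • a) = c • π a
  t_add : ∀ x y : E.X, t (x + y) = t x + t y
  t_smul : ∀ (c : ℂ) (x : E.X), t (c • x) = c • t x
  mul_t : ∀ (a : A) (x : E.X), π a * t x = t (E.la a x)
  t_mul : ∀ x y : E.X, star (t x) * t y = π (E.ip x y)

/-- Covariance of a representation on the Katsura ideal:
`π(a) = Ψ_t(φ_X(a))` for `a ∈ J_X`, expressed by simultaneous approximation of
`φ_X(a)` by finite-rank operators and of `π(a)` by the corresponding finite sums. -/
def CorrRep.Covariant {A : Type u} [NonUnitalCStarAlgebra A] {E : Corr A A}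
    {D : Type u} [NonUnitalCStarAlgebra D] (R : CorrRep E D) : Prop :=
  ∀ a ∈ E.katsuraIdeal, ∀ ε > (0 : ℝ), ∃ (k : ℕ) (x y : Fin k → E.X),
    ‖E.lmul a - ∑ i, E.rankOne (x i) (y i)‖ < ε ∧
    ‖R.π a - ∑ i, R.t (x i) * star (R.t (y i))‖ < ε

/-- The products `t(x₁)⋯t(xₙ)`, i.e. `t^n` applied to elementary tensors. -/
def CorrRep.tProd {A : Type u} [NonUnitalCStarAlgebra A] {E : Corr A A}
    {D : Type u} [NonUnitalCStarAlgebra D] (R : CorrRep E D) :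
    (n : ℕ) → (Fin (n + 1) → E.X) → D
  | 0, x => R.t (x 0)
  | (k + 1), x => R.t (x 0) * R.tProd k (fun i => x i.succ)

/-- A Cuntz–Pimsner algebra for `X`: a C*-algebra `O` with a universal injective covariant
representation of `X`, generated by the image of that representation. -/
structure CuntzPimsner {A : Type u} [NonUnitalCStarAlgebra A] (E : Corr A A) :
    Type (u + 1) where
  O : Type u
  [str : NonUnitalCStarAlgebra O]
  rep : CorrRep E O
  covariant : rep.Covariant
  injective : Function.Injective rep.π
  generates :
    Dense ((NonUnitalStarAlgebra.adjoin ℂ (Set.range rep.π ∪ Set.range rep.t) :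
      NonUnitalStarSubalgebra ℂ O) : Set O)
  universal : ∀ (D : Type u) [NonUnitalCStarAlgebra D] (R : CorrRep E D), R.Covariant →
    ∃ ρ : O → D, Continuous ρ ∧
      (∀ p q : O, ρ (p + q) = ρ p + ρ q) ∧
      (∀ (c : ℂ) (p : O), ρ (c • p) = c • ρ p) ∧
      (∀ p q : O, ρ (p * q) = ρ p * ρ q) ∧
      (∀ p : O, ρ (star p) = star (ρ p)) ∧
      (∀ a : A, ρ (rep.π a) = R.π a) ∧
      (∀ x : E.X, ρ (rep.t x) = R.t x)

attribute [instance] CuntzPimsner.str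

/-- The gauge action of the circle on a Cuntz–Pimsner algebra. -/
structure GaugeAction {A : Type u} [NonUnitalCStarAlgebra A] {E : Corr A A}
    (CP : CuntzPimsner E) where
  g : ℂ → CP.O → CP.O
  g_add : ∀ z : ℂ, ‖z‖ = 1 → ∀ S T : CP.O, g z (S + T) = g z S + g z T
  g_smul : ∀ z : ℂ, ‖z‖ = 1 → ∀ (c : ℂ) (S : CP.O), g z (c • S) = c • g z S
  g_mul : ∀ z : ℂ, ‖z‖ = 1 → ∀ S T : CP.O, g z (S * T) = g z S * g z T
  g_star : ∀ z : ℂ, ‖z‖ = 1 → ∀ S : CP.O, g z (star S) = star (g z S)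
  g_comp : ∀ z w : ℂ, ‖z‖ = 1 → ‖w‖ = 1 → ∀ S : CP.O, g (z * w) S = g z (g w S)
  g_one : ∀ S : CP.O, g 1 S = S
  g_cont : ∀ S : CP.O, Continuous fun z : {z : ℂ // ‖z‖ = 1} => g z.1 S
  g_π : ∀ z : ℂ, ‖z‖ = 1 → ∀ a : A, g z (CP.rep.π a) = CP.rep.π a
  g_t : ∀ z : ℂ, ‖z‖ = 1 → ∀ x : E.X, g z (CP.rep.t x) = z • CP.rep.t x

/-- The data of a morphism `X → Y` in the category `ECCor`: a regular `A–B` correspondence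
`M` with `J_X · M ⊆ M · J_Y`, together with a correspondence isomorphism
`U : X ⊗_A M → M ⊗_B Y`. -/
structure EMor {A B : Type u} [NonUnitalCStarAlgebra A] [NonUnitalCStarAlgebra B]
    (E : Corr A A) (F : Corr B B) : Type (u + 1) where
  M : Corr A B
  regular : M.Regular
  kat : KatsuraCompat E M F
  TXM : Corr A B
  tdXM : TensorData E M TXM
  TMY : Corr A B
  tdMY : TensorData M F TMY
  U : CorrIso TXM TMY

/-- Two morphism data `(M, U_M)` and `(M', U_{M'})` are isomorphic:
there is an isomorphism `ξ : M → M'` with `U_{M'} ∘ (1_X ⊗ ξ) = (ξ ⊗ 1_Y) ∘ U_M`. -/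
def EMorEquiv {A B : Type u} [NonUnitalCStarAlgebra A] [NonUnitalCStarAlgebra B]
    {E : Corr A A} {F : Corr B B} (m m' : EMor E F) : Prop :=
  ∃ ξ : CorrIso m.M m'.M,
  ∃ Ξ : m.TMY.X → m'.TMY.X,
    (∀ ζ η, Ξ (ζ + η) = Ξ ζ + Ξ η) ∧
    (∀ (c : ℂ) ζ, Ξ (c • ζ) = c • Ξ ζ) ∧
    Continuous Ξ ∧
    (∀ (mm : m.M.X) (y : F.X), Ξ (m.tdMY.mk2 mm y) = m'.tdMY.mk2 (ξ.toFun mm) y) ∧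
    (∀ (x : E.X) (mm : m.M.X),
      m'.U.toFun (m'.tdXM.mk2 x (ξ.toFun mm)) = Ξ (m.U.toFun (m.tdXM.mk2 x mm)))

/-- `p` is a composite of `m : X → Y` and `n : Y → Z` in `ECCor`:
`p.M = M ⊗_B N` and `U_P = (1_M ⊗ U_N)(U_M ⊗ 1_N)` modulo the canonical identifications. -/
def EIsComposite {A B C : Type u} [NonUnitalCStarAlgebra A] [NonUnitalCStarAlgebra B]
    [NonUnitalCStarAlgebra C] {E : Corr A A} {F : Corr B B} {G : Corr C C}
    (m : EMor E F) (n : EMor F G) (p : EMor E G) : Prop :=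
  ∃ td : TensorData m.M n.M p.M,
  ∃ Ξ : m.M.X → n.TMY.X → p.TMY.X,       -- m ⊗ (n ⊗ z) ↦ (m ⊗ n) ⊗ z
  ∃ Θ : m.TMY.X → n.M.X → p.TMY.X,       -- (m ⊗ y) ⊗ n ↦ m ⊗ U_N(y ⊗ n)
    (∀ mm : m.M.X, (∀ ζ η, Ξ mm (ζ + η) = Ξ mm ζ + Ξ mm η) ∧
      (∀ (c : ℂ) ζ, Ξ mm (c • ζ) = c • Ξ mm ζ) ∧ Continuous (Ξ mm)) ∧
    (∀ (mm : m.M.X) (nn : n.M.X) (z : G.X),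
      Ξ mm (n.tdMY.mk2 nn z) = p.tdMY.mk2 (td.mk2 mm nn) z) ∧
    (∀ nn : n.M.X, (∀ ζ η, Θ (ζ + η) nn = Θ ζ nn + Θ η nn) ∧
      (∀ (c : ℂ) ζ, Θ (c • ζ) nn = c • Θ ζ nn) ∧ Continuous (fun ζ => Θ ζ nn)) ∧
    (∀ (mm : m.M.X) (y : F.X) (nn : n.M.X),
      Θ (m.tdMY.mk2 mm y) nn = Ξ mm (n.U.toFun (n.tdXM.mk2 y nn))) ∧
    (∀ (x : E.X) (mm : m.M.X) (nn : n.M.X),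
      p.U.toFun (p.tdXM.mk2 x (td.mk2 mm nn)) = Θ (m.U.toFun (m.tdXM.mk2 x mm)) nn)

/-- `e` is an identity morphism on `X` in `ECCor`: `e.M` is the identity correspondence `A`
and `U_A = i_l⁻¹ ∘ i_r : X ⊗_A A → A ⊗_A X`, i.e. `i_l (U_A (x ⊗ a)) = x · a`. -/
def EIsIdentity {A : Type u} [NonUnitalCStarAlgebra A] {E : Corr A A}
    (e : EMor E E) : Prop :=
  ∃ idd : PullCorr (fun a : A => a) e.M,
  ∃ il : e.TMY.X → E.X,
    (∀ ζ η, il (ζ + η) = il ζ + il η) ∧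
    (∀ (c : ℂ) ζ, il (c • ζ) = c • il ζ) ∧
    Continuous il ∧
    Function.Injective il ∧
    (∀ (a : A) (x : E.X), il (e.tdMY.mk2 (idd.u a) x) = E.la a x) ∧
    (∀ (x : E.X) (a : A), il (e.U.toFun (e.tdXM.mk2 x (idd.u a))) = E.sm x a)

/-- A morphism in `ECCor` is an isomorphism: it has a two-sided inverse up to
isomorphism of morphism data. -/
def EIsEIso {A B : Type u} [NonUnitalCStarAlgebra A] [NonUnitalCStarAlgebra B]
    {E : Corr A A} {F : Corr B B} (m : EMor E F) : Prop :=
  ∃ (n : EMor F E) (p : EMor E E) (q : EMor F F) (e : EMor E E) (f : EMor F F),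
    EIsComposite m n p ∧ EIsIdentity e ∧ EMorEquiv p e ∧
    EIsComposite n m q ∧ EIsIdentity f ∧ EMorEquiv q f

/-- The standing data for the C-covariant representation of `X` on `K(M ⊗_B O_Y)`
associated with a morphism `[M, U_M] : X → Y` in `ECCor`:  `O_Y` regarded as a
`B–O_Y` correspondence, the tensor product `W = M ⊗_B O_Y`, the canonical map
`Λ : (M ⊗_B Y) × O_Y → W`, `(m ⊗ y, S) ↦ m ⊗ t_Y(y)S`, and the operators
`Φ(x) = (1_M ⊗ V_Y)(T(x) ⊗ 1_{O_Y})`. -/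
structure CCovSetup {A B : Type u} [NonUnitalCStarAlgebra A] [NonUnitalCStarAlgebra B]
    {E : Corr A A} {F : Corr B B} (m : EMor E F) (CPY : CuntzPimsner F) :
    Type (u + 1) where
  OYc : Corr B CPY.O
  pcY : PullCorr CPY.rep.π OYc
  W : Corr A CPY.O
  tdW : TensorData m.M OYc W
  Λ : m.TMY.X → CPY.O → W.X
  Λ_add : ∀ (S : CPY.O) (ζ η : m.TMY.X), Λ (ζ + η) S = Λ ζ S + Λ η S
  Λ_smul : ∀ (S : CPY.O) (c : ℂ) (ζ : m.TMY.X), Λ (c • ζ) S = c • Λ ζ S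
  Λ_cont : ∀ S : CPY.O, Continuous fun ζ => Λ ζ S
  Λ_mk : ∀ (mm : m.M.X) (y : F.X) (S : CPY.O),
    Λ (m.tdMY.mk2 mm y) S = tdW.mk2 mm (pcY.u (CPY.rep.t y * S))
  Φ : E.X → (W.X →L[ℂ] W.X)
  Φ_mk : ∀ (x : E.X) (mm : m.M.X) (S : CPY.O),
    Φ x (tdW.mk2 mm (pcY.u S)) = Λ (m.U.toFun (m.tdXM.mk2 x mm)) S

/-- The homomorphism `σ : O_X → K(M ⊗_B O_Y) ⊆ L(M ⊗_B O_Y)` induced by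
the C-covariant representation. -/
structure SigmaData {A B : Type u} [NonUnitalCStarAlgebra A] [NonUnitalCStarAlgebra B]
    {E : Corr A A} {F : Corr B B} {m : EMor E F} {CPY : CuntzPimsner F}
    (st : CCovSetup m CPY) (CPX : CuntzPimsner E) where
  σ : CPX.O → (st.W.X →L[ℂ] st.W.X)
  σ_add : ∀ S T : CPX.O, σ (S + T) = σ S + σ T
  σ_smul : ∀ (c : ℂ) (S : CPX.O), σ (c • S) = c • σ S
  σ_mul : ∀ S T : CPX.O, σ (S * T) = (σ S).comp (σ T)
  σ_star : ∀ S : CPX.O, st.W.IsAdjointPair (σ S) (σ (star S))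
  σ_cont : Continuous σ
  σ_t : ∀ x : E.X, σ (CPX.rep.t x) = st.Φ x
  σ_π : ∀ a : A, σ (CPX.rep.π a) = st.W.lmul a

/-- A bundled C*-correspondence over a C*-algebra. -/
structure BCorr : Type (u + 1) where
  alg : Type u
  [str : NonUnitalCStarAlgebra alg]
  cor : Corr alg alg

attribute [instance] BCorr.str

/-- Elementary strong shift equivalence through *regular* correspondences `R`, `S`:
`X ≅ R ⊗_B S` and `Y ≅ S ⊗_A R`. -/
def ElemSSERegular (E F : BCorr) : Prop :=
  ∃ (R : Corr E.alg F.alg) (S : Corr F.alg E.alg)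
    (T₁ : Corr E.alg E.alg) (_ : TensorData R S T₁)
    (T₂ : Corr F.alg F.alg) (_ : TensorData S R T₂),
    R.Regular ∧ S.Regular ∧ Nonempty (CorrIso T₁ E.cor) ∧ Nonempty (CorrIso T₂ F.cor)

/-- Strong shift equivalence (with all intermediate data regular). -/
def StrongSSERegular (E F : BCorr) : Prop :=
  ∃ (n : ℕ) (Z : Fin (n + 1) → BCorr),
    Z 0 = E ∧ Z (Fin.last n) = F ∧
    (∀ i, (Z i).cor.Regular) ∧
    ∀ i : Fin n, ElemSSERegular (Z i.castSucc) (Z i.succ)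

/-- The tower of tensor powers `X^{⊗ k}` of a correspondence `X` over `A`
(with `X^{⊗ 0} = A`), together with the "append on the right" maps
`X^{⊗ k} × X → X^{⊗ (k+1)}`. -/
structure PowerTower {A : Type u} [NonUnitalCStarAlgebra A] (E : Corr A A) :
    Type (u + 1) where
  P : ℕ → Corr A A
  zero : PullCorr (fun a : A => a) (P 0)
  step : ∀ k : ℕ, TensorData E (P k) (P (k + 1))
  app : ∀ k : ℕ, (P k).X → E.X → (P (k + 1)).X
  app_add : ∀ (k : ℕ) (y : E.X) (w w' : (P k).X), app k (w + w') y = app k w y + app k w' y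
  app_smul : ∀ (k : ℕ) (y : E.X) (c : ℂ) (w : (P k).X), app k (c • w) y = c • app k w y
  app_cont : ∀ (k : ℕ) (y : E.X), Continuous fun w => app k w y
  app_base : ∀ (a : A) (y : E.X) (b : A),
    (P 1).sm (app 0 (zero.u a) y) b = (step 0).mk2 (E.la a y) (zero.u b)
  app_step : ∀ (k : ℕ) (x : E.X) (w : (P k).X) (y : E.X),
    app (k + 1) ((step k).mk2 x w) y = (step (k + 1)).mk2 x (app k w y)

end

/-! Both isomorphisms are written down on total families of elementary tensors,
`a ⊗ S ↦ π(a) S` for the identity and `(m ⊗ S) ⊗ χ ↦ T_m (σ(S) χ)` for a composite, where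
`T_m : N ⊗_C O_Z → (M ⊗_B N) ⊗_C O_Z` is the creation operator `n ⊗ R ↦ (m ⊗ n) ⊗ R`.
They preserve Gram matrices, so they extend to isometries, and their ranges are dense, hence
everything. The elements of `O_X` whose left actions they intertwine form a closed
`*`-subalgebra, so it is enough to check the generators `π(a)` and `t(x)`. For `t(x)`, which
acts through `Φ(x)` and `U_M`, the two sides are compared through the bilinear map
`(m ⊗ y, χ) ↦ T_m (σ(t(y)) χ)` on `(M ⊗_B Y) × (N ⊗_C O_Z)`, and the composite
`U_{M ⊗ N} = (1 ⊗ U_N)(U_M ⊗ 1)` is exactly what makes them agree. -/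

noncomputable section

universe u

open Filter Topology Function

section Clspan

variable {V Z : Type*} [NormedAddCommGroup V] [NormedSpace ℂ V]
  [NormedAddCommGroup Z] [NormedSpace ℂ Z]

theorem coe_topologicalClosure_span (s : Set V) :
    ((Submodule.span ℂ s).topologicalClosure : Set V) = clspan s :=
  Submodule.topologicalClosure_coe _

theorem subset_clspan (s : Set V) : s ⊆ clspan s :=
  fun _ hx => subset_closure (Submodule.subset_span hx)

theorem clspan_subset {s : Set V} {S : Submodule ℂ V} (hS : IsClosed (S : Set V))
    (h : s ⊆ S) : clspan s ⊆ S :=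
  closure_minimal (Submodule.span_le.2 h) hS

theorem mem_of_clspan_eq_univ {s : Set V} (hs : clspan s = Set.univ) {S : Submodule ℂ V}
    (hS : IsClosed (S : Set V)) (h : s ⊆ S) (x : V) : x ∈ S :=
  clspan_subset hS h (hs ▸ Set.mem_univ x)

theorem clspan_eq_univ_of_subset {s t : Set V} (hs : clspan s = Set.univ)
    (h : s ⊆ clspan t) : clspan t = Set.univ := by
  refine Set.eq_univ_of_forall fun x => ?_
  rw [← coe_topologicalClosure_span] at h ⊢
  exact mem_of_clspan_eq_univ hs (Submodule.isClosed_topologicalClosure _) h x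

theorem clspan_range_of_surjective {α : Type*} {f : α → V} (hf : Surjective f) :
    clspan (Set.range f) = Set.univ :=
  Set.eq_univ_of_univ_subset (hf.range_eq ▸ subset_clspan _)

theorem clspan_range_comp {α : Type*} {v : α → V} (hv : clspan (Set.range v) = Set.univ)
    (T : V →L[ℂ] Z) (hT : Surjective T) : clspan (Set.range (T ∘ v)) = Set.univ := by
  refine Set.eq_univ_of_forall fun z => ?_
  obtain ⟨x, rfl⟩ := hT z
  rw [← coe_topologicalClosure_span]
  refine mem_of_clspan_eq_univ hv
    (S := (Submodule.span ℂ _).topologicalClosure.comap (T : V →ₗ[ℂ] Z))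
    ((Submodule.isClosed_topologicalClosure _).preimage T.continuous) ?_ x
  rintro _ ⟨i, rfl⟩
  exact Submodule.le_topologicalClosure _ (Submodule.subset_span ⟨i, rfl⟩)

theorem denseRange_of_clspan {ι : Type*} (F : V →L[ℂ] Z) (v : ι → V)
    (h : clspan (Set.range (F ∘ v)) = Set.univ) : DenseRange F := by
  refine dense_iff_closure_eq.2 (Set.eq_univ_of_univ_subset (h ▸ closure_mono ?_))
  have hspan : Submodule.span ℂ (Set.range (F ∘ v)) ≤ LinearMap.range (F : V →ₗ[ℂ] Z) :=
    Submodule.span_le.2 (Set.range_comp_subset_range v F)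
  exact hspan

/-- The bounded linear extension of `v i ↦ g i`: junk unless `range v` is total and
`‖∑ cᵢ gᵢ‖ ≤ K ‖∑ cᵢ vᵢ‖` for some `K` (see `extendFamily_apply`). -/
def extendFamily [CompleteSpace Z] {ι : Type*} (v : ι → V) (g : ι → Z) : V →L[ℂ] Z :=
  (Finsupp.linearCombination ℂ g).extendOfNorm (Finsupp.linearCombination ℂ v)

section ExtendFamily

variable {ι : Type*} {v : ι → V} {g : ι → Z} {K : ℝ}

theorem linearCombination_norm_le
    (hK : ∀ (s : Finset ι) (c : ι → ℂ), ‖∑ i ∈ s, c i • g i‖ ≤ K * ‖∑ i ∈ s, c i • v i‖)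
    (l : ι →₀ ℂ) :
    ‖Finsupp.linearCombination ℂ g l‖ ≤ K * ‖Finsupp.linearCombination ℂ v l‖ := by
  simpa only [Finsupp.linearCombination_apply, Finsupp.sum] using hK l.support l

theorem denseRange_linearCombination (hv : clspan (Set.range v) = Set.univ) :
    DenseRange (Finsupp.linearCombination ℂ v) := by
  rw [DenseRange, ← LinearMap.coe_range, Finsupp.range_linearCombination,
    dense_iff_closure_eq]
  exact hv

variable [CompleteSpace Z]

theorem extendFamily_apply (hv : clspan (Set.range v) = Set.univ)
    (hK : ∀ (s : Finset ι) (c : ι → ℂ), ‖∑ i ∈ s, c i • g i‖ ≤ K * ‖∑ i ∈ s, c i • v i‖)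
    (i : ι) : extendFamily v g (v i) = g i := by
  simpa [extendFamily] using LinearMap.extendOfNorm_eq (denseRange_linearCombination hv)
    ⟨K, linearCombination_norm_le hK⟩ (Finsupp.single i 1)

end ExtendFamily

end Clspan

namespace Corr

variable {A B : Type u} [NonUnitalCStarAlgebra A] [NonUnitalCStarAlgebra B] (E : Corr A B)

theorem ip_sm_left (x y : E.X) (b : B) : E.ip (E.sm x b) y = star b * E.ip x y := by
  rw [← E.ip_star, E.ip_sm, star_mul, E.ip_star]

def ipCLM (x : E.X) : E.X →L[ℂ] B :=
  LinearMap.mkContinuous ⟨⟨E.ip x, E.ip_add x⟩, fun c y => E.ip_smul c x y⟩ ‖x‖ (E.ip_bound x)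

@[simp] theorem ipCLM_apply (x y : E.X) : E.ipCLM x y = E.ip x y := rfl

theorem ip_sub (x y z : E.X) : E.ip x (y - z) = E.ip x y - E.ip x z := map_sub (E.ipCLM x) y z

theorem ip_sub_left (x y z : E.X) : E.ip (x - y) z = E.ip x z - E.ip y z := by
  rw [← E.ip_star, ip_sub, star_sub, E.ip_star, E.ip_star]

@[simp] theorem lmul_apply (a : A) (x : E.X) : E.lmul a x = E.la a x := rfl

theorem la_zero_left (x : E.X) : E.la 0 x = 0 := by
  simpa using E.la_add' 0 0 x

def laCLM (x : E.X) : A →L[ℂ] E.X :=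
  LinearMap.mkContinuous ⟨⟨fun a => E.la a x, fun a b => E.la_add' a b x⟩,
    fun c a => E.la_smul' c a x⟩ ‖x‖ fun a => by rw [mul_comm]; exact E.la_bound a x

@[simp] theorem laCLM_apply (a : A) (x : E.X) : E.laCLM x a = E.la a x := rfl

theorem ext_ip {x y : E.X} (h : ∀ z, E.ip z x = E.ip z y) : x = y := by
  have h0 : E.ip (x - y) (x - y) = 0 := by rw [ip_sub, h, sub_self]
  have := E.ip_norm (x - y)
  rw [h0, norm_zero, sq_eq_zero_iff, norm_eq_zero, sub_eq_zero] at this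
  exact this

theorem norm_eq_of_ip_eq {A' : Type u} [NonUnitalCStarAlgebra A'] {E' : Corr A' B} {x : E.X}
    {x' : E'.X} (h : E'.ip x' x' = E.ip x x) : ‖x'‖ = ‖x‖ :=
  (sq_eq_sq₀ (norm_nonneg _) (norm_nonneg _)).1 (by rw [E.ip_norm, E'.ip_norm, h])

theorem ip_sum_smul {ι : Type*} (s : Finset ι) (c : ι → ℂ) (f g : ι → E.X) :
    E.ip (∑ i ∈ s, c i • f i) (∑ j ∈ s, c j • g j)
      = ∑ i ∈ s, ∑ j ∈ s, (starRingEnd ℂ (c i) * c j) • E.ip (f i) (g j) := by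
  rw [← E.ip_star, ← ipCLM_apply, map_sum, star_sum]
  refine Finset.sum_congr rfl fun i _ => ?_
  rw [map_smul, star_smul, ipCLM_apply, E.ip_star, ← ipCLM_apply, map_sum, Finset.smul_sum]
  refine Finset.sum_congr rfl fun j _ => ?_
  rw [map_smul, ipCLM_apply, smul_smul, starRingEnd_apply]

end Corr

section GramBounds

variable {R₁ R₂ S₁ S₂ : Type u} [NonUnitalCStarAlgebra R₁] [NonUnitalCStarAlgebra R₂]
  [NonUnitalCStarAlgebra S₁] [NonUnitalCStarAlgebra S₂] {ι : Type*}

theorem Corr.norm_sum_le_of_ip_eq_map {P : Corr R₁ S₁} {Q : Corr R₂ S₂} {v : ι → P.X}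
    {g : ι → Q.X} (D : S₁ →ₗ[ℂ] S₂) {K : ℝ} (hK : 0 ≤ K) (hD : ∀ b, ‖D b‖ ≤ K * ‖b‖)
    (hip : ∀ i j, Q.ip (g i) (g j) = D (P.ip (v i) (v j))) (s : Finset ι) (c : ι → ℂ) :
    ‖∑ i ∈ s, c i • g i‖ ≤ √K * ‖∑ i ∈ s, c i • v i‖ := by
  have key : Q.ip (∑ i ∈ s, c i • g i) (∑ j ∈ s, c j • g j)
      = D (P.ip (∑ i ∈ s, c i • v i) (∑ j ∈ s, c j • v j)) := by
    simp only [Corr.ip_sum_smul, map_sum, map_smul, hip]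
  rw [← sq_le_sq₀ (norm_nonneg _) (by positivity), mul_pow, Real.sq_sqrt hK, Q.ip_norm,
    P.ip_norm, key]
  exact hD _

theorem Corr.norm_sum_le_of_ip_eq_apply {P : Corr R₁ S₁} {Q : Corr R₂ S₁} {v : ι → P.X}
    {g : ι → Q.X} (L : P.X →L[ℂ] P.X) (hip : ∀ i j, Q.ip (g i) (g j) = P.ip (v i) (L (v j)))
    (s : Finset ι) (c : ι → ℂ) :
    ‖∑ i ∈ s, c i • g i‖ ≤ √‖L‖ * ‖∑ i ∈ s, c i • v i‖ := by
  set x := ∑ i ∈ s, c i • v i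
  have key : Q.ip (∑ i ∈ s, c i • g i) (∑ j ∈ s, c j • g j) = P.ip x (L x) := by
    simp only [x, Corr.ip_sum_smul, map_sum, map_smul, hip]
  rw [← sq_le_sq₀ (norm_nonneg _) (by positivity), mul_pow, Real.sq_sqrt (norm_nonneg _),
    Q.ip_norm, key]
  calc ‖P.ip x (L x)‖ ≤ ‖x‖ * (‖L‖ * ‖x‖) :=
        (P.ip_bound _ _).trans (mul_le_mul_of_nonneg_left (L.le_opNorm x) (norm_nonneg _))
    _ = ‖L‖ * ‖x‖ ^ 2 := by ring

theorem Corr.ip_apply_eq_of_total {P : Corr R₁ S₁} {Q : Corr R₂ S₁} {v : ι → P.X}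
    (hv : clspan (Set.range v) = Set.univ) (F G : P.X →L[ℂ] Q.X) (L : P.X →L[ℂ] P.X)
    (h : ∀ i j, Q.ip (F (v i)) (G (v j)) = P.ip (v i) (L (v j))) (x y : P.X) :
    Q.ip (F x) (G y) = P.ip x (L y) := by
  have hleft : ∀ i y, Q.ip (F (v i)) (G y) = P.ip (v i) (L y) := fun i =>
    DFunLike.congr_fun <| ContinuousLinearMap.ext_on (dense_iff_closure_eq.2 hv)
      (f := (Q.ipCLM (F (v i))).comp G) (g := (P.ipCLM (v i)).comp L)
      (by rintro _ ⟨j, rfl⟩; exact h i j)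
  have hright : (Q.ipCLM (G y)).comp F = P.ipCLM (L y) :=
    ContinuousLinearMap.ext_on (dense_iff_closure_eq.2 hv) (by
      rintro _ ⟨i, rfl⟩
      simp only [ContinuousLinearMap.comp_apply, Corr.ipCLM_apply]
      rw [← Q.ip_star, hleft, P.ip_star])
  rw [← Q.ip_star, ← Corr.ipCLM_apply, ← ContinuousLinearMap.comp_apply, hright,
    Corr.ipCLM_apply, P.ip_star]

end GramBounds

namespace Corr

variable {R₁ R₂ S : Type u} [NonUnitalCStarAlgebra R₁] [NonUnitalCStarAlgebra R₂]
  [NonUnitalCStarAlgebra S] {P : Corr R₁ S} {Q : Corr R₂ S} {ι : Type*} {v : ι → P.X}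
  {g : ι → Q.X}

theorem extendFamily_apply_of_ip_eq (hv : clspan (Set.range v) = Set.univ)
    (hip : ∀ i j, Q.ip (g i) (g j) = P.ip (v i) (v j)) (i : ι) : extendFamily v g (v i) = g i :=
  extendFamily_apply hv (norm_sum_le_of_ip_eq_map LinearMap.id zero_le_one
    (fun b => (one_mul ‖b‖).ge) hip) i

theorem ip_extendFamily (hv : clspan (Set.range v) = Set.univ)
    (hip : ∀ i j, Q.ip (g i) (g j) = P.ip (v i) (v j)) (x y : P.X) :
    Q.ip (extendFamily v g x) (extendFamily v g y) = P.ip x y :=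
  ip_apply_eq_of_total hv _ _ (ContinuousLinearMap.id ℂ P.X) (fun i j => by
    rw [extendFamily_apply_of_ip_eq hv hip, extendFamily_apply_of_ip_eq hv hip, hip]; rfl) x y

end Corr

namespace Corr

variable {R S : Type u} [NonUnitalCStarAlgebra R] [NonUnitalCStarAlgebra S] {P Q : Corr R S}
  (F : P.X →L[ℂ] Q.X)

theorem surjective_of_ip_eq (hip : ∀ x y, Q.ip (F x) (F y) = P.ip x y) (hF : DenseRange F) :
    Surjective F := by
  have hiso : Isometry F :=
    AddMonoidHomClass.isometry_of_norm F fun x => P.norm_eq_of_ip_eq (hip x x)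
  rw [← Set.range_eq_univ, ← hiso.isUniformInducing.isComplete_range.isClosed.closure_eq]
  exact hF.closure_range

theorem map_la_star (hip : ∀ x y, Q.ip (F x) (F y) = P.ip x y) (hF : Surjective F) {r : R}
    (hr : ∀ x, F (P.la r x) = Q.la r (F x)) (x : P.X) :
    F (P.la (star r) x) = Q.la (star r) (F x) := by
  refine Q.ext_ip fun z => ?_
  obtain ⟨w, rfl⟩ := hF z
  rw [hip, ← P.la_adj, ← hip, hr, Q.la_adj]

theorem nonempty_corrIso (hip : ∀ x y, Q.ip (F x) (F y) = P.ip x y) (hF : Surjective F)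
    (hla : ∀ r x, F (P.la r x) = Q.la r (F x)) : Nonempty (CorrIso P Q) := by
  have hinj : Function.Injective F := fun x y hxy => P.ext_ip fun z => by
    rw [← P.ip_star, ← hip, hxy, hip, P.ip_star]
  exact ⟨{ toFun := F
           invFun := Function.invFun F
           left_inv := Function.leftInverse_invFun hinj
           right_inv := Function.rightInverse_invFun hF
           map_add := map_add F
           map_smul := map_smul F
           map_la := hla
           map_ip := hip }⟩

end Corr

namespace TensorData

variable {A B C : Type u} [NonUnitalCStarAlgebra A] [NonUnitalCStarAlgebra B]
  [NonUnitalCStarAlgebra C] {E : Corr A B} {F : Corr B C} {T : Corr A C}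
  (td : TensorData E F T)

theorem norm_mk2_le (x : E.X) (y : F.X) : ‖td.mk2 x y‖ ≤ ‖x‖ * ‖y‖ := by
  rw [← sq_le_sq₀ (norm_nonneg _) (by positivity), T.ip_norm, td.ip_mk]
  calc ‖F.ip y (F.la (E.ip x x) y)‖ ≤ ‖y‖ * (‖E.ip x x‖ * ‖y‖) :=
        (F.ip_bound _ _).trans (mul_le_mul_of_nonneg_left (F.la_bound _ _) (norm_nonneg _))
    _ = (‖x‖ * ‖y‖) ^ 2 := by rw [← E.ip_norm]; ring

def tensorRight (y : F.X) : E.X →L[ℂ] T.X :=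
  LinearMap.mkContinuous ⟨⟨fun x => td.mk2 x y, fun x x' => td.add_l x x' y⟩,
    fun c x => td.smul_l c x y⟩ ‖y‖ fun x => by rw [mul_comm]; exact td.norm_mk2_le x y

@[simp] theorem tensorRight_apply (x : E.X) (y : F.X) : td.tensorRight y x = td.mk2 x y := rfl

theorem clspan_range_mk2 {α β : Type*} {f : α → E.X} {g : β → F.X}
    (hf : clspan (Set.range f) = Set.univ) (hg : Surjective g) :
    clspan (Set.range fun q : α × β => td.mk2 (f q.1) (g q.2)) = Set.univ := by
  set S :=
    (Submodule.span ℂ (Set.range fun q : α × β => td.mk2 (f q.1) (g q.2))).topologicalClosure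
  have hS : IsClosed (S : Set T.X) := Submodule.isClosed_topologicalClosure _
  have hmk : ∀ x y, td.mk2 x y ∈ S := by
    intro x y
    obtain ⟨b, rfl⟩ := hg y
    refine mem_of_clspan_eq_univ hf (S := S.comap (td.tensorRight (g b) : E.X →ₗ[ℂ] T.X))
      (hS.preimage (td.tensorRight _).continuous) ?_ x
    rintro _ ⟨a, rfl⟩
    exact Submodule.le_topologicalClosure _ (Submodule.subset_span ⟨(a, b), rfl⟩)
  rw [← coe_topologicalClosure_span]
  exact Set.eq_univ_of_forall <| mem_of_clspan_eq_univ td.dense hS (by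
    rintro _ ⟨⟨x, y⟩, rfl⟩
    exact hmk x y)

end TensorData

namespace PullCorr

variable {A D : Type u} [NonUnitalCStarAlgebra A] [NonUnitalCStarAlgebra D] {ψ : A → D}
  {C : Corr A D} (pc : PullCorr ψ C)

theorem norm_u (d : D) : ‖pc.u d‖ = ‖d‖ :=
  (sq_eq_sq₀ (norm_nonneg _) (norm_nonneg _)).1 <| by
    rw [C.ip_norm, pc.ip, CStarRing.norm_star_mul_self, sq]

def toCLM : D →L[ℂ] C.X :=
  LinearMap.mkContinuous ⟨⟨pc.u, pc.add⟩, pc.smul⟩ 1 fun d => by simp [pc.norm_u]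

@[simp] theorem toCLM_apply (d : D) : pc.toCLM d = pc.u d := rfl

end PullCorr

namespace ReCorr

variable {B C D : Type u} [NonUnitalCStarAlgebra B] [NonUnitalCStarAlgebra C]
  [NonUnitalCStarAlgebra D] {W : Corr B D} {σ : C → (W.X →L[ℂ] W.X)} {W' : Corr C D}
  (rc : ReCorr W σ W')

def toCLM : W.X →L[ℂ] W'.X :=
  LinearMap.mkContinuous ⟨⟨rc.w, rc.add⟩, rc.smul⟩ 1 fun ξ => by
    simp [W.norm_eq_of_ip_eq (rc.ip_eq ξ ξ)]

@[simp] theorem toCLM_apply (ξ : W.X) : rc.toCLM ξ = rc.w ξ := rfl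

theorem clspan_range_w {α : Type*} {v : α → W.X} (hv : clspan (Set.range v) = Set.univ) :
    clspan (Set.range fun i => rc.w (v i)) = Set.univ :=
  clspan_range_comp hv rc.toCLM rc.bij.2

end ReCorr

theorem eq_of_star_mul_eq {D : Type*} [NonUnitalCStarAlgebra D] {u v : D}
    (h₁ : star u * v = star u * u) (h₂ : star v * u = star u * u)
    (h₃ : star v * v = star u * u) : u = v := by
  rw [← sub_eq_zero, ← CStarRing.star_mul_self_eq_zero_iff, star_sub, sub_mul, mul_sub,
    mul_sub, h₁, h₂, h₃]
  abel

namespace CorrRep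

variable {A D : Type u} [NonUnitalCStarAlgebra A] [NonUnitalCStarAlgebra D] {E : Corr A A}
  (R : CorrRep E D)

def πHom : A →⋆ₙₐ[ℂ] D where
  toFun := R.π
  map_smul' := R.π_smul
  map_zero' := by simpa using R.π_add 0 0
  map_add' := R.π_add
  map_mul' := R.π_mul
  map_star' := R.π_star

@[simp] theorem πHom_apply (a : A) : R.πHom a = R.π a := rfl

theorem norm_π_le (a : A) : ‖R.π a‖ ≤ ‖a‖ := NonUnitalStarAlgHom.norm_apply_le R.πHom a

theorem continuous_π : Continuous R.π :=
  AddMonoidHomClass.continuous_of_bound R.πHom 1 fun a => by simpa using R.norm_π_le a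

theorem norm_t_le (x : E.X) : ‖R.t x‖ ≤ ‖x‖ := by
  rw [← sq_le_sq₀ (norm_nonneg _) (norm_nonneg _), sq, ← CStarRing.norm_star_mul_self,
    R.t_mul, E.ip_norm]
  exact R.norm_π_le _

def tCLM : E.X →L[ℂ] D :=
  LinearMap.mkContinuous ⟨⟨R.t, R.t_add⟩, R.t_smul⟩ 1 fun x => by
    rw [one_mul]; exact R.norm_t_le x

@[simp] theorem tCLM_apply (x : E.X) : R.tCLM x = R.t x := rfl

theorem t_sm (x : E.X) (b : A) : R.t (E.sm x b) = R.t x * R.π b := by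
  have hq : star (R.t (E.sm x b)) * R.t (E.sm x b) = R.π (star b * E.ip x x * b) := by
    rw [R.t_mul, E.ip_sm, E.ip_sm_left, mul_assoc]
  refine eq_of_star_mul_eq ?_ ?_ ?_ <;> rw [hq]
  · rw [← mul_assoc, R.t_mul, E.ip_sm_left, ← R.π_mul]
  · rw [star_mul, mul_assoc, R.t_mul, ← R.π_star, ← R.π_mul, E.ip_sm, mul_assoc]
  · rw [star_mul, mul_assoc, ← mul_assoc (star (R.t x)), R.t_mul, ← R.π_star, ← R.π_mul,
      ← R.π_mul, mul_assoc]

end CorrRep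

theorem mem_closure_range_mul_self {D : Type*} [NonUnitalCStarAlgebra D] (a : D) :
    a ∈ closure (Set.range fun b : D => b * a) := by
  let _ := CStarAlgebra.spectralOrder D
  have _ := CStarAlgebra.spectralOrderedRing D
  have hl := CStarAlgebra.increasingApproximateUnit D
  have _ := hl.neBot
  exact mem_closure_of_tendsto (hl.tendsto_mul_right a) (Eventually.of_forall fun b => ⟨b, rfl⟩)

namespace Corr

variable {A B : Type u} [NonUnitalCStarAlgebra A] [NonUnitalCStarAlgebra B] (E : Corr A B)

theorem norm_sm_sub (x : E.X) (b : B) {c : B} (hc : E.ip x x = star c * c) :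
    ‖E.sm x b - x‖ = ‖c * b - c‖ := by
  refine (sq_eq_sq₀ (norm_nonneg _) (norm_nonneg _)).1 ?_
  rw [E.ip_norm, sq, ← CStarRing.norm_star_mul_self, E.ip_sub_left, E.ip_sub, E.ip_sub,
    E.ip_sm_left, E.ip_sm_left, E.ip_sm, hc, star_sub, star_mul]
  noncomm_ring

theorem mem_closure_range_sm (x : E.X) : x ∈ closure (Set.range (E.sm x)) := by
  let _ := CStarAlgebra.spectralOrder B
  have _ := CStarAlgebra.spectralOrderedRing B
  have hl := CStarAlgebra.increasingApproximateUnit B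
  have _ := hl.neBot
  obtain ⟨c, hc⟩ := E.ip_pos x
  have h : Tendsto (E.sm x) (CStarAlgebra.approximateUnit B) (𝓝 x) := by
    rw [tendsto_iff_norm_sub_tendsto_zero]
    simp only [E.norm_sm_sub x _ hc]
    exact tendsto_iff_norm_sub_tendsto_zero.1 (hl.tendsto_mul_left c)
  exact mem_closure_of_tendsto h (Eventually.of_forall fun b => ⟨b, rfl⟩)

end Corr

namespace CuntzPimsner

variable {A : Type u} [NonUnitalCStarAlgebra A] {E : Corr A A} (CP : CuntzPimsner E)

theorem mem_of_isClosed (S : NonUnitalStarSubalgebra ℂ CP.O) (hS : IsClosed (S : Set CP.O))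
    (hπ : ∀ a, CP.rep.π a ∈ S) (ht : ∀ x, CP.rep.t x ∈ S) (z : CP.O) : z ∈ S := by
  have hgen : NonUnitalStarAlgebra.adjoin ℂ (Set.range CP.rep.π ∪ Set.range CP.rep.t) ≤ S :=
    NonUnitalStarAlgebra.adjoin_le
      (Set.union_subset (Set.range_subset_iff.2 hπ) (Set.range_subset_iff.2 ht))
  exact closure_minimal hgen hS (CP.generates.closure_eq ▸ Set.mem_univ z)

theorem mem_of_isClosed_rightIdeal (D : Submodule ℂ CP.O) (hD : IsClosed (D : Set CP.O))
    (hmul : ∀ z ∈ D, ∀ w, z * w ∈ D) (hπ : ∀ a, CP.rep.π a ∈ D) (ht : ∀ x, CP.rep.t x ∈ D)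
    (hts : ∀ x, star (CP.rep.t x) ∈ D) (z : CP.O) : z ∈ D :=
  let S : NonUnitalStarSubalgebra ℂ CP.O :=
    { carrier := {z | z ∈ D ∧ star z ∈ D}
      add_mem' := fun hz hw => ⟨D.add_mem hz.1 hw.1, by rw [star_add]; exact D.add_mem hz.2 hw.2⟩
      zero_mem' := ⟨D.zero_mem, by rw [star_zero]; exact D.zero_mem⟩
      mul_mem' := fun hz hw => ⟨hmul _ hz.1 _, by rw [star_mul]; exact hmul _ hw.2 _⟩
      smul_mem' := fun c _ hz => ⟨D.smul_mem c hz.1, by rw [star_smul]; exact D.smul_mem _ hz.2⟩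
      star_mem' := fun hz => ⟨hz.2, by rw [star_star]; exact hz.1⟩ }
  (CP.mem_of_isClosed S (hD.inter (hD.preimage continuous_star))
    (fun a => ⟨hπ a, CP.rep.π_star a ▸ hπ (star a)⟩) (fun x => ⟨ht x, hts x⟩) z).1

theorem clspan_range_π_mul :
    clspan (Set.range fun q : A × CP.O => CP.rep.π q.1 * q.2) = Set.univ := by
  set D := (Submodule.span ℂ (Set.range fun q : A × CP.O => CP.rep.π q.1 * q.2)).topologicalClosure
  have hD : IsClosed (D : Set CP.O) := Submodule.isClosed_topologicalClosure _
  have hgen : ∀ a S, CP.rep.π a * S ∈ D := fun a S =>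
    Submodule.le_topologicalClosure _ (Submodule.subset_span ⟨(a, S), rfl⟩)
  have hmul : ∀ z ∈ D, ∀ w, z * w ∈ D := fun z hz w =>
    clspan_subset (s := Set.range fun q : A × CP.O => CP.rep.π q.1 * q.2)
      (S := D.comap (LinearMap.mulRight ℂ w)) (hD.preimage (continuous_mul_const w))
      (by rintro _ ⟨⟨a, S⟩, rfl⟩; simpa [mul_assoc] using hgen a (S * w))
      (by rw [← coe_topologicalClosure_span]; exact hz)
  have hπ : ∀ a, CP.rep.π a ∈ D := fun a =>
    hD.closure_subset <| map_mem_closure CP.rep.continuous_π (mem_closure_range_mul_self a)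
      (by rintro _ ⟨b, rfl⟩; simpa [CP.rep.π_mul] using hgen b (CP.rep.π a))
  have ht : ∀ x, CP.rep.t x ∈ D := mem_of_clspan_eq_univ E.nondeg
    (S := D.comap (CP.rep.tCLM : E.X →ₗ[ℂ] CP.O)) (IsClosed.preimage CP.rep.tCLM.continuous hD)
    (by rintro _ ⟨a, y, rfl⟩; simpa [← CP.rep.mul_t] using hgen a (CP.rep.t y))
  have hts : ∀ x, star (CP.rep.t x) ∈ D := fun x =>
    hD.closure_subset <| map_mem_closure (f := fun y => star (CP.rep.t y))
      (continuous_star.comp CP.rep.tCLM.continuous)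
      (E.mem_closure_range_sm x) (by
        rintro _ ⟨b, rfl⟩
        simpa [CP.rep.t_sm, CP.rep.π_star] using hgen (star b) (star (CP.rep.t x)))
  rw [← coe_topologicalClosure_span]
  exact Set.eq_univ_of_forall (CP.mem_of_isClosed_rightIdeal D hD hmul hπ ht hts)

end CuntzPimsner

theorem CuntzPimsner.nonempty_corrIso_of_generators {A S : Type u} [NonUnitalCStarAlgebra A]
    [NonUnitalCStarAlgebra S] {E : Corr A A} (CP : CuntzPimsner E) {P Q : Corr CP.O S}
    (F : P.X →L[ℂ] Q.X) (hip : ∀ x y, Q.ip (F x) (F y) = P.ip x y) (hF : DenseRange F)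
    {ι : Type*} {v : ι → P.X} (hv : clspan (Set.range v) = Set.univ)
    (hπ : ∀ a i, F (P.la (CP.rep.π a) (v i)) = Q.la (CP.rep.π a) (F (v i)))
    (ht : ∀ x i, F (P.la (CP.rep.t x) (v i)) = Q.la (CP.rep.t x) (F (v i))) :
    Nonempty (CorrIso P Q) := by
  have hsurj := Corr.surjective_of_ip_eq F hip hF
  have hgen : ∀ r, (∀ i, F (P.la r (v i)) = Q.la r (F (v i))) →
      ∀ x, F (P.la r x) = Q.la r (F x) := fun r h =>
    DFunLike.congr_fun <| ContinuousLinearMap.ext_on (dense_iff_closure_eq.2 hv)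
      (f := F.comp (P.lmul r)) (g := (Q.lmul r).comp F) (by rintro _ ⟨i, rfl⟩; exact h i)
  let S : NonUnitalStarSubalgebra ℂ CP.O :=
    { carrier := {r | ∀ x, F (P.la r x) = Q.la r (F x)}
      add_mem' := fun hr hs x => by rw [P.la_add', map_add, hr, hs, Q.la_add']
      zero_mem' := fun x => by rw [P.la_zero_left, map_zero, Q.la_zero_left]
      mul_mem' := fun hr hs x => by rw [P.la_mul, hr, hs, Q.la_mul]
      smul_mem' := fun c r hr x => by rw [P.la_smul', map_smul, hr, Q.la_smul']
      star_mem' := fun hr => Corr.map_la_star F hip hsurj hr }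
  have hS : IsClosed (S : Set CP.O) := by
    change IsClosed {r | ∀ x, F (P.la r x) = Q.la r (F x)}
    rw [Set.ofPred_forall]
    exact isClosed_iInter fun x => isClosed_eq (F.continuous.comp (P.laCLM x).continuous)
      (Q.laCLM (F x)).continuous
  exact Corr.nonempty_corrIso F hip hsurj fun r =>
    CP.mem_of_isClosed S hS (fun a => hgen _ (hπ a)) (fun x => hgen _ (ht x)) r

namespace CCovSetup

variable {A B : Type u} [NonUnitalCStarAlgebra A] [NonUnitalCStarAlgebra B] {E : Corr A A}
  {F : Corr B B} {m : EMor E F} {CPY : CuntzPimsner F} (st : CCovSetup m CPY)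

def ΛCLM (S : CPY.O) : m.TMY.X →L[ℂ] st.W.X :=
  ⟨IsLinearMap.mk' (st.Λ · S) ⟨st.Λ_add S, st.Λ_smul S⟩, st.Λ_cont S⟩

@[simp] theorem ΛCLM_apply (S : CPY.O) (ζ : m.TMY.X) : st.ΛCLM S ζ = st.Λ ζ S := rfl

theorem clspan_range_mk2 {α : Type*} {f : α → m.M.X} (hf : clspan (Set.range f) = Set.univ) :
    clspan (Set.range fun q : α × CPY.O => st.tdW.mk2 (f q.1) (st.pcY.u q.2)) = Set.univ :=
  st.tdW.clspan_range_mk2 hf st.pcY.bij.2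

theorem ip_mk2 (mm mm' : m.M.X) (S S' : CPY.O) :
    st.W.ip (st.tdW.mk2 mm (st.pcY.u S)) (st.tdW.mk2 mm' (st.pcY.u S'))
      = star S * (CPY.rep.π (m.M.ip mm mm') * S') := by
  rw [st.tdW.ip_mk, st.pcY.la, st.pcY.ip]

end CCovSetup

namespace SigmaData

variable {A B : Type u} [NonUnitalCStarAlgebra A] [NonUnitalCStarAlgebra B] {E : Corr A A}
  {F : Corr B B} {m : EMor E F} {CPY : CuntzPimsner F} {st : CCovSetup m CPY}
  {CPX : CuntzPimsner E} (sd : SigmaData st CPX)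

theorem σ_π_apply (a : A) (ξ : st.W.X) : sd.σ (CPX.rep.π a) ξ = st.W.la a ξ := by
  rw [sd.σ_π]; rfl

theorem σ_mul_apply (S S' : CPX.O) (ξ : st.W.X) : sd.σ (S * S') ξ = sd.σ S (sd.σ S' ξ) := by
  rw [sd.σ_mul]; rfl

end SigmaData

section IdentityMorphism

variable {A : Type u} [NonUnitalCStarAlgebra A] {E : Corr A A} {e : EMor E E}
  {CPX : CuntzPimsner E} {ste : CCovSetup e CPX} {sde : SigmaData ste CPX}
  {We : Corr CPX.O CPX.O} {OXid : Corr CPX.O CPX.O}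

theorem map_Λ_of_isIdentity (rc : ReCorr ste.W sde.σ We)
    (pc : PullCorr (fun S : CPX.O => S) OXid) (idd : PullCorr (fun a : A => a) e.M)
    {il : e.TMY.X → E.X} (hil : IsLinearMap ℂ il) (hilc : Continuous il)
    (hil_la : ∀ a x, il (e.tdMY.mk2 (idd.u a) x) = E.la a x)
    (Fe : We.X →L[ℂ] OXid.X)
    (hFe : ∀ a S, Fe (rc.w (ste.tdW.mk2 (idd.u a) (ste.pcY.u S))) = pc.u (CPX.rep.π a * S))
    (S : CPX.O) (ζ : e.TMY.X) :
    Fe (rc.w (ste.Λ ζ S)) = pc.u (CPX.rep.t (il ζ) * S) := by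
  have h := ContinuousLinearMap.ext_on (f := Fe.comp (rc.toCLM.comp (ste.ΛCLM S)))
    (g := pc.toCLM.comp (((ContinuousLinearMap.mul ℂ CPX.O).flip S).comp
      (CPX.rep.tCLM.comp ⟨hil.mk' il, hilc⟩)))
    (dense_iff_closure_eq.2 (e.tdMY.clspan_range_mk2 (clspan_range_of_surjective idd.bij.2)
      surjective_id)) (by
      rintro _ ⟨⟨a, x⟩, rfl⟩
      change Fe (rc.w (ste.Λ (e.tdMY.mk2 (idd.u a) x) S))
        = pc.u (CPX.rep.t (il (e.tdMY.mk2 (idd.u a) x)) * S)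
      rw [ste.Λ_mk, hFe, hil_la, ← CPX.rep.mul_t, mul_assoc])
  exact DFunLike.congr_fun h ζ

theorem nonempty_corrIso_of_isIdentity (hid : EIsIdentity e) (rc : ReCorr ste.W sde.σ We)
    (pc : PullCorr (fun S : CPX.O => S) OXid) : Nonempty (CorrIso We OXid) := by
  obtain ⟨idd, il, hil_add, hil_smul, hil_cont, -, hil_la, hil_U⟩ := hid
  set v := fun q : A × CPX.O => rc.w (ste.tdW.mk2 (idd.u q.1) (ste.pcY.u q.2))
  set g := fun q : A × CPX.O => pc.u (CPX.rep.π q.1 * q.2)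
  have hv : clspan (Set.range v) = Set.univ :=
    rc.clspan_range_w (ste.clspan_range_mk2 (clspan_range_of_surjective idd.bij.2))
  have hip : ∀ i j, OXid.ip (g i) (g j) = We.ip (v i) (v j) := by
    rintro ⟨a, S⟩ ⟨a', S'⟩
    simp only [v, g, pc.ip, rc.ip_eq, ste.ip_mk2, idd.ip, star_mul, CPX.rep.π_mul,
      CPX.rep.π_star, mul_assoc]
  set Fe := extendFamily v g
  have hFe : ∀ a S, Fe (v (a, S)) = g (a, S) := fun a S =>
    Corr.extendFamily_apply_of_ip_eq hv hip (a, S)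
  have hΛ := map_Λ_of_isIdentity rc pc idd ⟨hil_add, hil_smul⟩ hil_cont hil_la Fe hFe
  refine CPX.nonempty_corrIso_of_generators Fe (Corr.ip_extendFamily hv hip)
    (denseRange_of_clspan Fe v ?_) hv ?_ ?_
  · simpa only [Function.comp_def, hFe, g, PullCorr.toCLM_apply] using
      clspan_range_comp CPX.clspan_range_π_mul pc.toCLM pc.bij.2
  · rintro a₀ ⟨a, S⟩
    simp only [v, g, hFe, rc.la_eq, sde.σ_π_apply, ste.tdW.la_mk, idd.la, pc.la,
      CPX.rep.π_mul, mul_assoc]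
  · rintro x ⟨a, S⟩
    simp only [v, g, hFe, rc.la_eq, sde.σ_t, ste.Φ_mk, hΛ, hil_U, CPX.rep.t_sm, pc.la,
      mul_assoc]

end IdentityMorphism

section Creation

variable {A B C D : Type u} [NonUnitalCStarAlgebra A] [NonUnitalCStarAlgebra B]
  [NonUnitalCStarAlgebra C] [NonUnitalCStarAlgebra D] {M : Corr A B} {N : Corr B C}
  {P : Corr A C} {ψ : C → D} {K K' : Corr C D} {W : Corr B D} {V : Corr A D}
  (td : TensorData M N P) (pk : PullCorr ψ K) (pk' : PullCorr ψ K')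
  (tdW : TensorData N K W) (tdV : TensorData P K' V)

def TensorData.creation (mm : M.X) : W.X →L[ℂ] V.X :=
  extendFamily (fun q : N.X × D => tdW.mk2 q.1 (pk.u q.2))
    (fun q => tdV.mk2 (td.mk2 mm q.1) (pk'.u q.2))

namespace TensorData

theorem clspan_range_mk2_pullCorr :
    clspan (Set.range fun q : N.X × D => tdW.mk2 q.1 (pk.u q.2)) = Set.univ :=
  tdW.clspan_range_mk2 (f := id) (clspan_range_of_surjective surjective_id) pk.bij.2

theorem ip_mk2_creation (mm mm' : M.X) (q q' : N.X × D) :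
    V.ip (tdV.mk2 (td.mk2 mm q.1) (pk'.u q.2)) (tdV.mk2 (td.mk2 mm' q'.1) (pk'.u q'.2))
      = W.ip (tdW.mk2 q.1 (pk.u q.2)) (W.lmul (M.ip mm mm') (tdW.mk2 q'.1 (pk.u q'.2))) := by
  rw [tdV.ip_mk, td.ip_mk, Corr.lmul_apply, tdW.la_mk, tdW.ip_mk, pk'.la, pk'.ip, pk.la, pk.ip]

theorem creation_mk2 (mm : M.X) (nn : N.X) (d : D) :
    td.creation pk pk' tdW tdV mm (tdW.mk2 nn (pk.u d)) = tdV.mk2 (td.mk2 mm nn) (pk'.u d) :=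
  extendFamily_apply (clspan_range_mk2_pullCorr pk tdW)
    (Corr.norm_sum_le_of_ip_eq_apply _ (ip_mk2_creation td pk pk' tdW tdV mm mm)) (nn, d)

theorem ip_creation (mm mm' : M.X) (χ χ' : W.X) :
    V.ip (td.creation pk pk' tdW tdV mm χ) (td.creation pk pk' tdW tdV mm' χ')
      = W.ip χ (W.la (M.ip mm mm') χ') :=
  Corr.ip_apply_eq_of_total (clspan_range_mk2_pullCorr pk tdW) _ _ (W.lmul (M.ip mm mm'))
    (fun q q' => by
      rw [creation_mk2, creation_mk2]
      exact ip_mk2_creation td pk pk' tdW tdV mm mm' q q') χ χ'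

theorem la_creation (a : A) (mm : M.X) (χ : W.X) :
    V.la a (td.creation pk pk' tdW tdV mm χ) = td.creation pk pk' tdW tdV (M.la a mm) χ := by
  have h := ContinuousLinearMap.ext_on
    (dense_iff_closure_eq.2 (clspan_range_mk2_pullCorr pk tdW))
    (f := (V.lmul a).comp (td.creation pk pk' tdW tdV mm))
    (g := td.creation pk pk' tdW tdV (M.la a mm)) (by
      rintro _ ⟨⟨nn, d⟩, rfl⟩
      simp only [ContinuousLinearMap.comp_apply, creation_mk2, Corr.lmul_apply, tdV.la_mk,
        td.la_mk])
  exact DFunLike.congr_fun h χ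

end TensorData

end Creation

section Composition

variable {A B C : Type u} [NonUnitalCStarAlgebra A] [NonUnitalCStarAlgebra B]
  [NonUnitalCStarAlgebra C] {E : Corr A A} {F : Corr B B} {G : Corr C C} {m : EMor E F}
  {n : EMor F G} {p : EMor E G} {CPX : CuntzPimsner E} {CPY : CuntzPimsner F}
  {CPZ : CuntzPimsner G} {stm : CCovSetup m CPY} {stn : CCovSetup n CPZ}
  {stp : CCovSetup p CPZ}

def creationRep (sdn : SigmaData stn CPY) (td : TensorData m.M n.M p.M) :
    m.TMY.X →L[ℂ] (stn.W.X →L[ℂ] stp.W.X) :=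
  extendFamily (fun q : m.M.X × F.X => m.tdMY.mk2 q.1 q.2)
    (fun q => (td.creation stn.pcY stp.pcY stn.tdW stp.tdW q.1).comp (sdn.σ (CPY.rep.t q.2)))

variable (sdn : SigmaData stn CPY) (td : TensorData m.M n.M p.M)

theorem ip_creation_σ_t (χ : stn.W.X) (mm mm' : m.M.X) (y y' : F.X) :
    stp.W.ip (td.creation stn.pcY stp.pcY stn.tdW stp.tdW mm (sdn.σ (CPY.rep.t y) χ))
        (td.creation stn.pcY stp.pcY stn.tdW stp.tdW mm' (sdn.σ (CPY.rep.t y') χ))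
      = stn.W.ip χ (stn.W.la (m.TMY.ip (m.tdMY.mk2 mm y) (m.tdMY.mk2 mm' y')) χ) := by
  rw [TensorData.ip_creation, sdn.σ_star, ← sdn.σ_π_apply, ← sdn.σ_mul_apply,
    ← sdn.σ_mul_apply, mul_assoc, CPY.rep.mul_t, CPY.rep.t_mul, sdn.σ_π_apply, m.tdMY.ip_mk]

theorem creationRep_mk2 (mm : m.M.X) (y : F.X) :
    creationRep sdn td (m.tdMY.mk2 mm y)
      = (td.creation stn.pcY stp.pcY stn.tdW stp.tdW mm).comp (sdn.σ (CPY.rep.t y)) := by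
  refine extendFamily_apply (K := 1) m.tdMY.dense (fun s c => ?_) (mm, y)
  refine ContinuousLinearMap.opNorm_le_bound _ (by positivity) fun χ => ?_
  simp only [sum_apply, smul_apply, ContinuousLinearMap.comp_apply]
  let D : B →ₗ[ℂ] CPZ.O := (stn.W.ipCLM χ).comp (stn.W.laCLM χ)
  have hD : ∀ b, ‖D b‖ ≤ ‖χ‖ ^ 2 * ‖b‖ := fun b =>
    calc ‖D b‖ = ‖stn.W.ip χ (stn.W.la b χ)‖ := rfl
      _ ≤ ‖χ‖ * (‖b‖ * ‖χ‖) :=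
        (stn.W.ip_bound _ _).trans (mul_le_mul_of_nonneg_left (stn.W.la_bound b χ) (norm_nonneg _))
      _ = ‖χ‖ ^ 2 * ‖b‖ := by ring
  have := Corr.norm_sum_le_of_ip_eq_map D (by positivity) hD
    (fun i j => ip_creation_σ_t (stp := stp) sdn td χ i.1 j.1 i.2 j.2) s c
  rw [Real.sqrt_sq (norm_nonneg _)] at this
  linarith

theorem Φ_comp_creation {Ξ : m.M.X → n.TMY.X →L[ℂ] p.TMY.X}
    {Θ : n.M.X → m.TMY.X →L[ℂ] p.TMY.X}
    (hΞ : ∀ mm nn z, Ξ mm (n.tdMY.mk2 nn z) = p.tdMY.mk2 (td.mk2 mm nn) z)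
    (hΘ : ∀ mm y nn, Θ nn (m.tdMY.mk2 mm y) = Ξ mm (n.U.toFun (n.tdXM.mk2 y nn)))
    (hU : ∀ x mm nn, p.U.toFun (p.tdXM.mk2 x (td.mk2 mm nn)) = Θ nn (m.U.toFun (m.tdXM.mk2 x mm)))
    (x : E.X) (mm : m.M.X) :
    (stp.Φ x).comp (td.creation stn.pcY stp.pcY stn.tdW stp.tdW mm)
      = creationRep sdn td (m.U.toFun (m.tdXM.mk2 x mm)) := by
  set κ := td.creation stn.pcY stp.pcY stn.tdW stp.tdW
  have hΛΞ : ∀ mm' R, (stp.ΛCLM R).comp (Ξ mm') = (κ mm').comp (stn.ΛCLM R) := fun mm' R =>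
    ContinuousLinearMap.ext_on (dense_iff_closure_eq.2 n.tdMY.dense) (by
      rintro _ ⟨⟨nn, z⟩, rfl⟩
      simp [hΞ, stp.Λ_mk, stn.Λ_mk, κ, TensorData.creation_mk2])
  have hΛΘ : ∀ nn R, (ContinuousLinearMap.apply ℂ _ (stn.tdW.mk2 nn (stn.pcY.u R))).comp
      (creationRep sdn td) = (stp.ΛCLM R).comp (Θ nn) := fun nn R =>
    ContinuousLinearMap.ext_on (dense_iff_closure_eq.2 m.tdMY.dense) (by
      rintro _ ⟨⟨mm', y⟩, rfl⟩
      simp only [ContinuousLinearMap.comp_apply, ContinuousLinearMap.apply_apply,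
        creationRep_mk2, sdn.σ_t, stn.Φ_mk, CCovSetup.ΛCLM_apply, hΘ]
      exact (DFunLike.congr_fun (hΛΞ mm' R) _).symm)
  refine ContinuousLinearMap.ext_on
    (dense_iff_closure_eq.2 (TensorData.clspan_range_mk2_pullCorr stn.pcY stn.tdW)) ?_
  rintro _ ⟨⟨nn, R⟩, rfl⟩
  simp only [ContinuousLinearMap.comp_apply, κ, TensorData.creation_mk2, stp.Φ_mk, hU]
  exact (DFunLike.congr_fun (hΛΘ nn R) _).symm

end Composition

section CompositionIso

variable {A B C : Type u} [NonUnitalCStarAlgebra A] [NonUnitalCStarAlgebra B]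
  [NonUnitalCStarAlgebra C] {E : Corr A A} {F : Corr B B} {G : Corr C C} {m : EMor E F}
  {n : EMor F G} {p : EMor E G} {CPX : CuntzPimsner E} {CPY : CuntzPimsner F}
  {CPZ : CuntzPimsner G} {stm : CCovSetup m CPY} {stn : CCovSetup n CPZ}
  {stp : CCovSetup p CPZ} {sdm : SigmaData stm CPX} {sdn : SigmaData stn CPY}
  {sdp : SigmaData stp CPX} {W₁ : Corr CPX.O CPY.O} {W₂ : Corr CPY.O CPZ.O}
  {V : Corr CPX.O CPZ.O} {T : Corr CPX.O CPZ.O}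

theorem clspan_range_creation_σ (td : TensorData m.M n.M p.M) (rcV : ReCorr stp.W sdp.σ V) :
    clspan (Set.range fun q : (m.M.X × CPY.O) × stn.W.X =>
      rcV.w (td.creation stn.pcY stp.pcY stn.tdW stp.tdW q.1.1 (sdn.σ q.1.2 q.2)))
      = Set.univ := by
  refine clspan_eq_univ_of_subset (rcV.clspan_range_w (stp.clspan_range_mk2 td.dense)) ?_
  rw [← coe_topologicalClosure_span]
  set D := (Submodule.span ℂ (Set.range fun q : (m.M.X × CPY.O) × stn.W.X =>
      rcV.w (td.creation stn.pcY stp.pcY stn.tdW stp.tdW q.1.1 (sdn.σ q.1.2 q.2))))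
    |>.topologicalClosure
  have hD : IsClosed (D : Set V.X) := Submodule.isClosed_topologicalClosure _
  rintro _ ⟨⟨⟨mm, nn⟩, R⟩, rfl⟩
  simp only [← TensorData.creation_mk2 td stn.pcY stp.pcY stn.tdW stp.tdW]
  set Tm := rcV.toCLM.comp (td.creation stn.pcY stp.pcY stn.tdW stp.tdW mm)
  refine mem_of_clspan_eq_univ stn.W.nondeg (S := D.comap (Tm : stn.W.X →ₗ[ℂ] V.X))
    (hD.preimage Tm.continuous) ?_ _
  rintro _ ⟨b, η, rfl⟩
  refine Submodule.le_topologicalClosure _ (Submodule.subset_span ⟨((mm, CPY.rep.π b), η), ?_⟩)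
  simp [Tm, sdn.σ_π_apply]

theorem map_Λ_of_isComposite (td : TensorData m.M n.M p.M) (rc₁ : ReCorr stm.W sdm.σ W₁)
    (rc₂ : ReCorr stn.W sdn.σ W₂) (rcV : ReCorr stp.W sdp.σ V) (tdT : TensorData W₁ W₂ T)
    (Fc : T.X →L[ℂ] V.X) (hFc : ∀ mm S χ,
      Fc (tdT.mk2 (rc₁.w (stm.tdW.mk2 mm (stm.pcY.u S))) (rc₂.w χ))
        = rcV.w (td.creation stn.pcY stp.pcY stn.tdW stp.tdW mm (sdn.σ S χ)))
    (S : CPY.O) (χ : stn.W.X) (ζ : m.TMY.X) :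
    Fc (tdT.mk2 (rc₁.w (stm.Λ ζ S)) (rc₂.w χ)) = rcV.w (creationRep sdn td ζ (sdn.σ S χ)) := by
  have h := ContinuousLinearMap.ext_on (dense_iff_closure_eq.2 m.tdMY.dense)
    (f := Fc.comp ((tdT.tensorRight (rc₂.w χ)).comp (rc₁.toCLM.comp (stm.ΛCLM S))))
    (g := rcV.toCLM.comp ((ContinuousLinearMap.apply ℂ _ (sdn.σ S χ)).comp (creationRep sdn td)))
    (by
      rintro _ ⟨⟨mm, y⟩, rfl⟩
      change Fc (tdT.mk2 (rc₁.w (stm.Λ (m.tdMY.mk2 mm y) S)) (rc₂.w χ))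
        = rcV.w (creationRep sdn td (m.tdMY.mk2 mm y) (sdn.σ S χ))
      rw [stm.Λ_mk, hFc, creationRep_mk2, ContinuousLinearMap.comp_apply, sdn.σ_mul_apply])
  exact DFunLike.congr_fun h ζ

theorem nonempty_corrIso_of_isComposite (hcomp : EIsComposite m n p)
    (rc₁ : ReCorr stm.W sdm.σ W₁) (rc₂ : ReCorr stn.W sdn.σ W₂) (rcV : ReCorr stp.W sdp.σ V)
    (tdT : TensorData W₁ W₂ T) : Nonempty (CorrIso T V) := by
  obtain ⟨td, Ξ, Θ, hΞ, hΞ_mk, hΘ, hΘ_mk, hU⟩ := hcomp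
  set κ := td.creation stn.pcY stp.pcY stn.tdW stp.tdW
  set v := fun q : (m.M.X × CPY.O) × stn.W.X =>
    tdT.mk2 (rc₁.w (stm.tdW.mk2 q.1.1 (stm.pcY.u q.1.2))) (rc₂.w q.2)
  set g := fun q : (m.M.X × CPY.O) × stn.W.X => rcV.w (κ q.1.1 (sdn.σ q.1.2 q.2))
  have hv : clspan (Set.range v) = Set.univ := (tdT.clspan_range_mk2
    (rc₁.clspan_range_w (TensorData.clspan_range_mk2_pullCorr stm.pcY stm.tdW)) rc₂.bij.2 :)
  have hip : ∀ i j, V.ip (g i) (g j) = T.ip (v i) (v j) := by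
    rintro ⟨⟨mm, S⟩, χ⟩ ⟨⟨mm', S'⟩, χ'⟩
    simp only [v, g, κ, rcV.ip_eq, TensorData.ip_creation, tdT.ip_mk, rc₁.ip_eq, stm.ip_mk2,
      rc₂.la_eq, rc₂.ip_eq, sdn.σ_mul_apply, sdn.σ_π_apply]
    rw [sdn.σ_star]
  set Fc := extendFamily v g
  have hFc : ∀ mm S χ, Fc (v ((mm, S), χ)) = g ((mm, S), χ) := fun mm S χ =>
    Corr.extendFamily_apply_of_ip_eq hv hip ((mm, S), χ)
  have hΦ := Φ_comp_creation (stp := stp) sdn td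
    (Ξ := fun mm => ⟨IsLinearMap.mk' (Ξ mm) ⟨(hΞ mm).1, (hΞ mm).2.1⟩, (hΞ mm).2.2⟩)
    (Θ := fun nn => ⟨IsLinearMap.mk' (Θ · nn) ⟨(hΘ nn).1, (hΘ nn).2.1⟩, (hΘ nn).2.2⟩)
    hΞ_mk hΘ_mk hU
  refine CPX.nonempty_corrIso_of_generators Fc (Corr.ip_extendFamily hv hip)
    (denseRange_of_clspan Fc v ?_) hv ?_ ?_
  · simpa only [Function.comp_def, hFc] using clspan_range_creation_σ td rcV
  · rintro a ⟨⟨mm, S⟩, χ⟩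
    simp only [v, g, hFc, tdT.la_mk, rc₁.la_eq, sdm.σ_π_apply, stm.tdW.la_mk, rcV.la_eq,
      sdp.σ_π_apply, κ, TensorData.la_creation]
  · rintro x ⟨⟨mm, S⟩, χ⟩
    simp only [v, g, hFc, tdT.la_mk, rc₁.la_eq, sdm.σ_t, stm.Φ_mk,
      map_Λ_of_isComposite td rc₁ rc₂ rcV tdT Fc hFc, rcV.la_eq, sdp.σ_t, κ, ← hΦ,
      ContinuousLinearMap.comp_apply]

end CompositionIso

/-- The assignments `X ↦ O_X` and `[M, U_M] ↦ [M ⊗_B O_Y]` (with the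
left `O_X`-action through the induced homomorphism `σ`) define a functor from `ECCor`
to the enchilada category: for composable morphisms `[M, U_M] : X → Y`, `[N, U_N] : Y → Z`
there is an isomorphism of `O_X–O_Z` correspondences
`(M ⊗_B O_Y) ⊗_{O_Y} (N ⊗_C O_Z) ≅ (M ⊗_B N) ⊗_C O_Z`, and the identity morphism
`[A, U_A]` on `X` is sent to the class of the identity correspondence `O_X`. -/
theorem enchilada_functor :
    -- compatibility with composition
    (∀ (A B C : Type u) [NonUnitalCStarAlgebra A] [NonUnitalCStarAlgebra B]
        [NonUnitalCStarAlgebra C]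
        (E : Corr A A) (F : Corr B B) (G : Corr C C)
        (m : EMor E F) (n : EMor F G) (p : EMor E G), EIsComposite m n p →
      ∀ (CPX : CuntzPimsner E) (CPY : CuntzPimsner F) (CPZ : CuntzPimsner G)
        (stm : CCovSetup m CPY) (sdm : SigmaData stm CPX)
        (stn : CCovSetup n CPZ) (sdn : SigmaData stn CPY)
        (stp : CCovSetup p CPZ) (sdp : SigmaData stp CPX)
        -- M ⊗_B O_Y as an O_X–O_Y correspondence
        (W₁ : Corr CPX.O CPY.O) (_ : ReCorr stm.W sdm.σ W₁)
        -- N ⊗_C O_Z as an O_Y–O_Z correspondence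
        (W₂ : Corr CPY.O CPZ.O) (_ : ReCorr stn.W sdn.σ W₂)
        -- (M ⊗_B N) ⊗_C O_Z as an O_X–O_Z correspondence
        (V : Corr CPX.O CPZ.O) (_ : ReCorr stp.W sdp.σ V)
        -- the balanced tensor product (M ⊗_B O_Y) ⊗_{O_Y} (N ⊗_C O_Z)
        (T : Corr CPX.O CPZ.O) (_ : TensorData W₁ W₂ T),
      Nonempty (CorrIso T V)) ∧
    -- the identity morphism is sent to the identity correspondence
    (∀ (A : Type u) [NonUnitalCStarAlgebra A] (E : Corr A A)
        (e : EMor E E), EIsIdentity e →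
      ∀ (CPX : CuntzPimsner E)
        (ste : CCovSetup e CPX) (sde : SigmaData ste CPX)
        -- A ⊗_A O_X as an O_X–O_X correspondence
        (We : Corr CPX.O CPX.O) (_ : ReCorr ste.W sde.σ We)
        -- the identity correspondence O_X
        (OXid : Corr CPX.O CPX.O) (_ : PullCorr (fun S : CPX.O => S) OXid),
      Nonempty (CorrIso We OXid)) := by
  refine ⟨?_, ?_⟩
  · intro A B C _ _ _ E F G m n p hcomp CPX CPY CPZ stm sdm stn sdn stp sdp W₁ rc₁ W₂ rc₂ V rcV
      T tdT
    exact nonempty_corrIso_of_isComposite hcomp rc₁ rc₂ rcV tdT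
  · intro A _ E e hid CPX ste sde We rc OXid pc
    exact nonempty_corrIso_of_isIdentity hid rc pc

end
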